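/- arXiv:2405.09661 — 4 statements merged into one kernel-verified Lean document; each statement's English description precedes it below -/
import Mathlib

section
/- Let n ≥ 2, let Ω ⊆ ℝⁿ be open, let f : Ω → [0,∞) be locally integrable on Ω, let K ⊂ Ω be compact, let δ₀ ∈ (0, dist(K, ∂Ω)), and let ε > 0. Suppose S ⊆ K is a set such that ∫_{B_ρ(y)} f ≥ ε ρ^{n−2} for every y ∈ S and every 0 < ρ < δ₀. Then the (n−2)-dimensional Hausdorff measure of S is zero: H^{n−2}(S) = 0. -/
/-!
At a scale `δ`, the Vitali covering lemma picks from the balls `B(y, δ)`, `y ∈ S`, a countable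
disjoint subfamily whose fourfold enlargements cover `S`. Each of these balls carries
`ν`-mass at least `c δ^d` and they all lie in the `δ`-neighbourhood of `S`, so the covering
has `d`-dimensional size at most `8^d c⁻¹ ν(S_δ)`; letting `δ → 0` gives
`H^d(S) ≤ 8^d c⁻¹ ν(closure S)`.

The closure of `S` satisfies the same density bound with `c / 2^d`, so `H^d(closure S) < ∞`;
as `d < n` this makes `closure S` Lebesgue-null, hence `ν`-null for `ν = f dx`, and the
estimate for `S` becomes `H^d(S) = 0`.
-/

open MeasureTheory Metric Filter Set

open scoped ENNReal Topology

section Density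

variable {X : Type*} [MetricSpace X]

theorem exists_countable_pairwiseDisjoint_ball_cover [TopologicalSpace.SeparableSpace X]
    (S : Set X) {δ : ℝ} (hδ : 0 < δ) :
    ∃ u ⊆ S, u.Countable ∧ u.PairwiseDisjoint (ball · δ) ∧
      S ⊆ ⋃ b ∈ u, closedBall b (4 * δ) := by
  obtain ⟨u, huS, hdisj, hcov⟩ :=
    Vitali.exists_disjoint_subfamily_covering_enlargement_closedBall S id (fun _ => δ) δ
      (fun _ _ => le_rfl) 4 (by norm_num)
  have hdisj' : u.PairwiseDisjoint (ball · δ) :=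
    hdisj.mono fun _ => ball_subset_closedBall
  refine ⟨u, huS, hdisj'.countable_of_isOpen (fun _ _ => isOpen_ball)
    (fun _ _ => nonempty_ball.2 hδ), hdisj', fun a ha => ?_⟩
  obtain ⟨b, hbu, hab⟩ := hcov a ha
  exact mem_biUnion hbu (hab (mem_closedBall_self hδ.le))

theorem ediam_closedBall_four_mul_le (x : X) {r : ℝ} (hr : 0 ≤ r) :
    ediam (closedBall x (4 * r)) ≤ 8 * ENNReal.ofReal r := by
  rw [← closedEBall_ofReal (by positivity)]
  refine ediam_closedEBall_le.trans_eq ?_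
  rw [ENNReal.ofReal_mul (by norm_num), ← mul_assoc]
  norm_num

variable [MeasurableSpace X]

def LowerDensityBound (ν : Measure X) (d : ℝ) (c : ℝ≥0∞) (δ₀ : ℝ) (S : Set X) : Prop :=
  ∀ y ∈ S, ∀ ρ : ℝ, 0 < ρ → ρ < δ₀ → c * ENNReal.ofReal ρ ^ d ≤ ν (ball y ρ)

variable {ν : Measure X} {S : Set X} {c : ℝ≥0∞} {d δ₀ : ℝ}

theorem LowerDensityBound.to_closure (hd : 0 ≤ d) (h : LowerDensityBound ν d c δ₀ S) :
    LowerDensityBound ν d (c / 2 ^ d) δ₀ (closure S) := by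
  intro y hy ρ hρ hρδ₀
  obtain ⟨s, hs, hys⟩ := Metric.mem_closure_iff.1 hy (ρ / 2) (by positivity)
  have hball : ball s (ρ / 2) ⊆ ball y ρ :=
    ball_subset_ball' (by rw [dist_comm]; linarith)
  calc c / 2 ^ d * ENNReal.ofReal ρ ^ d = c * ENNReal.ofReal (ρ / 2) ^ d := by
        rw [ENNReal.ofReal_div_of_pos two_pos, ENNReal.div_rpow_of_nonneg _ _ hd,
          ENNReal.ofReal_ofNat, ENNReal.div_eq_inv_mul, ENNReal.div_eq_inv_mul]
        ring
    _ ≤ ν (ball s (ρ / 2)) := h s hs _ (by positivity) (by linarith)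
    _ ≤ ν (ball y ρ) := measure_mono hball

theorem tsum_measure_ball_le_measure_thickening [OpensMeasurableSpace X] {u : Set X} {δ : ℝ}
    (huS : u ⊆ S) (hu : u.Countable) (hdisj : u.PairwiseDisjoint (ball · δ)) :
    ∑' b : u, ν (ball b δ) ≤ ν (thickening δ S) := by
  rw [← measure_biUnion hu hdisj fun _ _ => measurableSet_ball]
  exact measure_mono (iUnion₂_subset fun b hb => ball_subset_thickening (huS hb) δ)

theorem exists_closedBall_cover_tsum_ediam_rpow_le [TopologicalSpace.SeparableSpace X]
    [OpensMeasurableSpace X] (hd : 0 ≤ d) (hc0 : c ≠ 0) (hc : c ≠ ∞) {δ : ℝ} (hδ : 0 < δ)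
    (hlow : ∀ y ∈ S, c * ENNReal.ofReal δ ^ d ≤ ν (ball y δ)) :
    ∃ u : Set X, u.Countable ∧ S ⊆ ⋃ b ∈ u, closedBall b (4 * δ) ∧
      ∑' b : u, ediam (closedBall (b : X) (4 * δ)) ^ d ≤ 8 ^ d * c⁻¹ * ν (thickening δ S) := by
  obtain ⟨u, huS, hu, hdisj, hcov⟩ := exists_countable_pairwiseDisjoint_ball_cover S hδ
  refine ⟨u, hu, hcov, ?_⟩
  have hball : ∀ b ∈ S, ediam (closedBall b (4 * δ)) ^ d ≤ 8 ^ d * c⁻¹ * ν (ball b δ) := by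
    intro b hb
    calc ediam (closedBall b (4 * δ)) ^ d ≤ (8 * ENNReal.ofReal δ) ^ d :=
          ENNReal.rpow_le_rpow (ediam_closedBall_four_mul_le b hδ.le) hd
      _ = 8 ^ d * c⁻¹ * (c * ENNReal.ofReal δ ^ d) := by
          rw [ENNReal.mul_rpow_of_nonneg _ _ hd, mul_assoc, ENNReal.inv_mul_cancel_left hc0 hc]
      _ ≤ 8 ^ d * c⁻¹ * ν (ball b δ) := by gcongr; exact hlow b hb
  calc ∑' b : u, ediam (closedBall (b : X) (4 * δ)) ^ d
      ≤ ∑' b : u, 8 ^ d * c⁻¹ * ν (ball b δ) := ENNReal.tsum_le_tsum fun b => hball b (huS b.2)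
    _ = 8 ^ d * c⁻¹ * ∑' b : u, ν (ball b δ) := ENNReal.tsum_mul_left
    _ ≤ 8 ^ d * c⁻¹ * ν (thickening δ S) := by
        gcongr; exact tsum_measure_ball_le_measure_thickening huS hu hdisj

theorem LowerDensityBound.hausdorffMeasure_le [TopologicalSpace.SeparableSpace X]
    [BorelSpace X] (h : LowerDensityBound ν d c δ₀ S) (hd : 0 ≤ d) (hc0 : c ≠ 0) (hc : c ≠ ∞)
    (hδ₀ : 0 < δ₀) (hfin : ν (thickening δ₀ S) ≠ ∞) :
    μH[d] S ≤ 8 ^ d * c⁻¹ * ν (closure S) := by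
  obtain ⟨δ, -, hδ_mem, hδ_lim⟩ := exists_seq_strictAnti_tendsto' hδ₀
  choose u hu hcov hsum using fun k =>
    exists_closedBall_cover_tsum_ediam_rpow_le hd hc0 hc (hδ_mem k).1
      fun y hy => h y hy _ (hδ_mem k).1 (hδ_mem k).2
  have hu_countable := fun k => (hu k).to_subtype
  have hδ_lim' : Tendsto δ atTop (𝓝[>] 0) :=
    tendsto_nhdsWithin_iff.2 ⟨hδ_lim, .of_forall fun k => (hδ_mem k).1⟩
  calc μH[d] S
      ≤ liminf (fun k => ∑' b : u k, ediam (closedBall (b : X) (4 * δ k)) ^ d) atTop := by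
        refine Measure.hausdorffMeasure_le_liminf_tsum d S (fun k => 8 * ENNReal.ofReal (δ k)) ?_
          (fun k (b : u k) => closedBall (b : X) (4 * δ k)) (.of_forall fun k b => ?_)
          (.of_forall fun k => by simpa only [iUnion_subtype] using hcov k)
        · simpa using ENNReal.Tendsto.const_mul (ENNReal.tendsto_ofReal hδ_lim) (.inr (by simp))
        · exact ediam_closedBall_four_mul_le (b : X) (hδ_mem k).1.le
    _ ≤ liminf (fun k => 8 ^ d * c⁻¹ * ν (thickening (δ k) S)) atTop :=
        liminf_le_liminf (.of_forall hsum)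
    _ = 8 ^ d * c⁻¹ * ν (closure S) :=
        (ENNReal.Tendsto.const_mul ((tendsto_measure_thickening ⟨δ₀, hδ₀, hfin⟩).comp hδ_lim')
          (.inr (ENNReal.mul_ne_top (by simp) (ENNReal.inv_ne_top.2 hc0)))).liminf_eq

end Density

theorem LowerDensityBound.hausdorffMeasure_eq_zero {E : Type*} [NormedAddCommGroup E]
    [InnerProductSpace ℝ E] [FiniteDimensional ℝ E] [MeasurableSpace E] [BorelSpace E]
    {ν : Measure E} {S : Set E} {c : ℝ≥0∞} {d δ₀ : ℝ} (h : LowerDensityBound ν d c δ₀ S)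
    (hν : ν ≪ volume) (hd : 0 ≤ d) (hdE : d < Module.finrank ℝ E) (hc0 : c ≠ 0) (hc : c ≠ ∞)
    (hδ₀ : 0 < δ₀) (hfin : ν (thickening δ₀ S) ≠ ∞) :
    μH[d] S = 0 := by
  have hνS : ν (closure S) ≠ ∞ :=
    ne_top_of_le_ne_top hfin (measure_mono (closure_subset_thickening hδ₀ S))
  have hH : μH[d] (closure S) ≠ ∞ := by
    refine ne_top_of_le_ne_top ?_ ((h.to_closure hd).hausdorffMeasure_le hd (by simp [hc0])
      (ENNReal.div_ne_top hc (by simp)) hδ₀ (by rwa [thickening_closure]))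
    rw [closure_closure]
    exact ENNReal.mul_ne_top (ENNReal.mul_ne_top (by simp) (by simp [hc0])) hνS
  have hvol : volume (closure S) = 0 := by
    rw [← InnerProductSpace.euclideanHausdorffMeasure_eq_volume,
      Measure.euclideanHausdorffMeasure_def, Measure.smul_apply,
      (Measure.hausdorffMeasure_zero_or_top hdE _).resolve_right hH, smul_zero]
  simpa [hν hvol] using h.hausdorffMeasure_le hd hc0 hc hδ₀ hfin

theorem IsCompact.cthickening_subset_of_lt_infDist {X : Type*} [PseudoMetricSpace X]
    {K U : Set X} (hK : IsCompact K) {δ : ℝ} (hδ : 0 ≤ δ) (hKU : ∀ y ∈ K, δ < infDist y Uᶜ) :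
    cthickening δ K ⊆ U := by
  rw [hK.cthickening_eq_biUnion_closedBall hδ]
  refine iUnion₂_subset fun y hy x hx => ?_
  by_contra hxU
  have := infDist_le_dist_of_mem (x := y) (mem_compl hxU)
  linarith [hKU y hy, mem_closedBall'.1 hx]

theorem ofReal_setIntegral_eq_withDensity_apply {X : Type*} [MeasurableSpace X] {μ : Measure X}
    {f : X → ℝ} {s : Set X} (hs : MeasurableSet s) (hf : IntegrableOn f s μ)
    (hf0 : ∀ x ∈ s, 0 ≤ f x) :
    ENNReal.ofReal (∫ x in s, f x ∂μ) = μ.withDensity (fun x => ENNReal.ofReal (f x)) s := by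
  rw [withDensity_apply _ hs,
    ofReal_integral_eq_lintegral_ofReal hf (ae_restrict_of_forall_mem hs hf0)]

theorem lowerDensityBound_withDensity {X : Type*} [MetricSpace X] [MeasurableSpace X]
    [OpensMeasurableSpace X] {μ : Measure X} {f : X → ℝ} {U S : Set X} {d ε δ₀ : ℝ}
    (hf : IntegrableOn f U μ) (hf0 : ∀ x ∈ U, 0 ≤ f x) (hSU : ∀ y ∈ S, closedBall y δ₀ ⊆ U)
    (hε : 0 ≤ ε) (hlow : ∀ y ∈ S, ∀ ρ : ℝ, 0 < ρ → ρ < δ₀ → ε * ρ ^ d ≤ ∫ x in ball y ρ, f x ∂μ) :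
    LowerDensityBound (μ.withDensity fun x => ENNReal.ofReal (f x)) d (ENNReal.ofReal ε) δ₀ S := by
  intro y hy ρ hρ hρδ₀
  have hball : ball y ρ ⊆ U :=
    ball_subset_closedBall.trans <| (closedBall_subset_closedBall hρδ₀.le).trans (hSU y hy)
  rw [ENNReal.ofReal_rpow_of_pos hρ, ← ENNReal.ofReal_mul hε,
    ← ofReal_setIntegral_eq_withDensity_apply measurableSet_ball (hf.mono_set hball)
      fun x hx => hf0 x (hball hx)]
  exact ENNReal.ofReal_le_ofReal (hlow y hy ρ hρ hρδ₀)

theorem lower_energy_bound_hausdorff_null_general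
    (n : ℕ) (hn : 2 ≤ n)
    (Ω : Set (EuclideanSpace ℝ (Fin n)))
    (f : EuclideanSpace ℝ (Fin n) → ℝ)
    (hf0 : ∀ x ∈ Ω, 0 ≤ f x)
    (hfloc : LocallyIntegrableOn f Ω volume)
    (K : Set (EuclideanSpace ℝ (Fin n))) (hK : IsCompact K)
    (δ₀ : ℝ) (hδ₀ : 0 < δ₀) (hδ₀dist : ∀ y ∈ K, δ₀ < infDist y Ωᶜ)
    (ε : ℝ) (hε : 0 < ε)
    (S : Set (EuclideanSpace ℝ (Fin n))) (hSK : S ⊆ K)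
    (hlow : ∀ y ∈ S, ∀ ρ : ℝ, 0 < ρ → ρ < δ₀ →
      ε * ρ ^ ((n : ℝ) - 2) ≤ ∫ x in ball y ρ, f x) :
    μH[(n : ℝ) - 2] S = 0 := by
  have hKΩ : cthickening δ₀ K ⊆ Ω := hK.cthickening_subset_of_lt_infDist hδ₀.le hδ₀dist
  have hfK : IntegrableOn f (cthickening δ₀ K) :=
    hfloc.integrableOn_compact_subset hKΩ hK.cthickening
  have hdensity := lowerDensityBound_withDensity hfK (fun x hx => hf0 x (hKΩ hx))
    (fun y hy => closedBall_subset_cthickening (hSK hy) δ₀) hε.le hlow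
  have hνK : volume.withDensity (fun x => ENNReal.ofReal (f x)) (cthickening δ₀ K) ≠ ∞ := by
    rw [withDensity_apply _ isClosed_cthickening.measurableSet]
    exact hfK.lintegral_lt_top.ne
  refine hdensity.hausdorffMeasure_eq_zero (withDensity_absolutelyContinuous _ _) (by simp [hn])
    (by simp) (ENNReal.ofReal_pos.2 hε).ne' ENNReal.ofReal_ne_top hδ₀ ?_
  exact ne_top_of_le_ne_top hνK <| measure_mono <|
    (thickening_subset_cthickening δ₀ S).trans (cthickening_subset_of_subset δ₀ hSK)

/-- The covering-argument form of Theorem 6 of the paper: if `f : Ω → [0,∞)` is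
locally integrable on the open set `Ω ⊆ ℝⁿ` (`n ≥ 2`), `K ⊂ Ω` is compact,
`0 < δ₀ < dist(K, ∂Ω)`, `ε > 0`, and `S ⊆ K` is a set with
`∫_{B_ρ(y)} f ≥ ε ρ^(n-2)` for all `y ∈ S` and `0 < ρ < δ₀`, then the
`(n-2)`-dimensional Hausdorff measure of `S` vanishes. -/
theorem lower_energy_bound_hausdorff_null
    (n : ℕ) (hn : 2 ≤ n)
    (Ω : Set (EuclideanSpace ℝ (Fin n))) (hΩ : IsOpen Ω)
    (f : EuclideanSpace ℝ (Fin n) → ℝ)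
    (hf0 : ∀ x ∈ Ω, 0 ≤ f x)
    (hfloc : LocallyIntegrableOn f Ω volume)
    (K : Set (EuclideanSpace ℝ (Fin n))) (hK : IsCompact K) (hKΩ : K ⊆ Ω)
    (δ₀ : ℝ) (hδ₀ : 0 < δ₀) (hδ₀dist : ∀ y ∈ K, δ₀ < infDist y Ωᶜ)
    (ε : ℝ) (hε : 0 < ε)
    (S : Set (EuclideanSpace ℝ (Fin n))) (hSK : S ⊆ K)
    (hlow : ∀ y ∈ S, ∀ ρ : ℝ, 0 < ρ → ρ < δ₀ →
      ε * ρ ^ ((n : ℝ) - 2) ≤ ∫ x in ball y ρ, f x) :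
    μH[(n : ℝ) - 2] S = 0 :=
  lower_energy_bound_hausdorff_null_general n hn Ω f hf0 hfloc K hK δ₀ hδ₀ hδ₀dist ε hε S hSK hlow
end

section
/- Let n ≥ 3 and p ≥ 1, and let φ : ℝⁿ → ℝ^p be homogeneous of degree zero, i.e. φ(λx) = φ(x) for every λ > 0 and x ∈ ℝⁿ, differentiable at every x ≠ 0, with |Dφ|² locally integrable on ℝⁿ. Suppose the monotonicity identity holds at every center: for all y ∈ ℝⁿ and all 0 < σ < ρ, ρ^{2−n} ∫_{B_ρ(y)} |Dφ|² − σ^{2−n} ∫_{B_σ(y)} |Dφ|² = 2 ∫_{B_ρ(y)∖B_σ(y)} |x−y|^{2−n} ‖Dφ(x)((x−y)/|x−y|)‖² dx. Then for every y ∈ ℝⁿ the density Θ_φ(y) := lim_{ρ↓0} ρ^{2−n} ∫_{B_ρ(y)} |Dφ|² exists and satisfies Θ_φ(y) ≤ Θ_φ(0) = ∫_{B_1(0)} |Dφ|²; that is, the density of a homogeneous degree zero map attains its maximum at the origin. -/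
open MeasureTheory Metric Filter Set Topology

/-!
Differentiating `l ↦ φ (l • x)` at `l = 1` shows that the radial derivative of a degree zero
homogeneous map vanishes. Hence the monotonicity identity centred at `0` has vanishing right-hand
side, so the normalized energy `ρ ^ (2 - n) ∫_{B_ρ(0)} |Dφ|²` is constant, equal to `Θ_φ(0)`.
At any other centre `y` the identity makes it nondecreasing in `ρ`, so `Θ_φ(y)` exists and is at
most its value at every radius `ρ`. Since `B_ρ(y) ⊆ B_{ρ + |y|}(0)`, that value is at most
`(ρ / (ρ + |y|)) ^ (2 - n) Θ_φ(0)`, which tends to `Θ_φ(0)` as `ρ → ∞`.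
-/

theorem HasFDerivAt.apply_self_eq_zero_of_smul_invariant
    {E F : Type*} [NormedAddCommGroup E] [NormedSpace ℝ E] [NormedAddCommGroup F]
    [NormedSpace ℝ F] {f : E → F} {f' : E →L[ℝ] F} {x : E}
    (hf : ∀ l : ℝ, 0 < l → f (l • x) = f x) (hfx : HasFDerivAt f f' x) : f' x = 0 := by
  have hline : HasDerivAt (fun l : ℝ => f (l • x)) (f' x) 1 := by
    have hray : HasDerivAt (fun l : ℝ => l • x) x 1 := by
      simpa using (hasDerivAt_id (1 : ℝ)).smul_const x
    rw [← one_smul ℝ x] at hfx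
    exact hfx.comp_hasDerivAt 1 hray
  have hconst : HasDerivAt (fun l : ℝ => f (l • x)) 0 1 :=
    (hasDerivAt_const (1 : ℝ) (f x)).congr_of_eventuallyEq <|
      eventually_of_mem (Ioi_mem_nhds one_pos) hf
  exact hline.unique hconst

theorem setIntegral_mul_norm_apply_smul_self_sq_eq_zero
    {E F : Type*} [NormedAddCommGroup E] [NormedSpace ℝ E] [MeasurableSpace E]
    [NormedAddCommGroup F] [NormedSpace ℝ F] {φ : E → F} {Dφ : E → E →L[ℝ] F}
    (hφ : ∀ l : ℝ, 0 < l → ∀ x, φ (l • x) = φ x) (hDφ : ∀ x, x ≠ 0 → HasFDerivAt φ (Dφ x) x)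
    {μ : Measure E} {s : Set E} (h0 : (0 : E) ∉ s) (w c : E → ℝ) :
    ∫ x in s, w x * ‖Dφ x (c x • x)‖ ^ 2 ∂μ = 0 := by
  refine setIntegral_eq_zero_of_forall_eq_zero fun x hx => ?_
  have hx0 : x ≠ 0 := fun h => h0 (h ▸ hx)
  simp [(hDφ x hx0).apply_self_eq_zero_of_smul_invariant (fun l hl => hφ l hl x)]

theorem eq_apply_one_of_forall_sub_eq_zero {f : ℝ → ℝ}
    (hf : ∀ σ ρ, 0 < σ → σ < ρ → f ρ - f σ = 0) {ρ : ℝ} (hρ : 0 < ρ) : f ρ = f 1 := by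
  rcases lt_trichotomy ρ 1 with h | rfl | h
  · linarith [hf ρ 1 hρ h]
  · rfl
  · linarith [hf 1 ρ one_pos h]

section ScaledBallIntegral

variable {E : Type*} [PseudoMetricSpace E] [MeasurableSpace E]

noncomputable def scaledBallIntegral (μ : Measure E) (s : ℝ) (e : E → ℝ) (y : E) (ρ : ℝ) : ℝ :=
  ρ ^ s * ∫ x in ball y ρ, e x ∂μ

variable {μ : Measure E} {s : ℝ} {e : E → ℝ}

theorem scaledBallIntegral_nonneg (he : 0 ≤ e) (y : E) {ρ : ℝ} (hρ : 0 ≤ ρ) :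
    0 ≤ scaledBallIntegral μ s e y ρ :=
  mul_nonneg (Real.rpow_nonneg hρ s) (integral_nonneg fun x => he x)

theorem exists_tendsto_scaledBallIntegral_nhdsGT (he : 0 ≤ e) {y : E}
    (hmono : MonotoneOn (scaledBallIntegral μ s e y) (Ioi 0)) :
    ∃ Θ, Tendsto (scaledBallIntegral μ s e y) (𝓝[>] 0) (𝓝 Θ) ∧
      ∀ ρ, 0 < ρ → Θ ≤ scaledBallIntegral μ s e y ρ := by
  have hbdd : BddBelow (scaledBallIntegral μ s e y '' Ioi 0) := by
    refine ⟨0, ?_⟩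
    rintro _ ⟨ρ, hρ, rfl⟩
    exact scaledBallIntegral_nonneg he y hρ.le
  exact ⟨_, hmono.tendsto_nhdsGT hbdd, fun ρ hρ => csInf_le hbdd (mem_image_of_mem _ hρ)⟩

end ScaledBallIntegral

section Normed

variable {E : Type*} [SeminormedAddCommGroup E] [MeasurableSpace E]
  {μ : Measure E} {s : ℝ} {e : E → ℝ}

theorem setIntegral_ball_zero_eq_of_scaledBallIntegral_eq {Θ R : ℝ} (hR : 0 < R)
    (hΘ : scaledBallIntegral μ s e 0 R = Θ) :
    ∫ x in ball (0 : E) R, e x ∂μ = (R ^ s)⁻¹ * Θ := by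
  rw [← hΘ, scaledBallIntegral, inv_mul_cancel_left₀ (Real.rpow_pos_of_pos hR s).ne']

theorem scaledBallIntegral_le_rpow_mul_of_const_at_zero (he : 0 ≤ e)
    (hint : ∀ R, IntegrableOn e (ball 0 R) μ) {Θ : ℝ}
    (hΘ : ∀ R, 0 < R → scaledBallIntegral μ s e 0 R = Θ) (y : E) {ρ : ℝ} (hρ : 0 < ρ) :
    scaledBallIntegral μ s e y ρ ≤ (ρ / (ρ + ‖y‖)) ^ s * Θ := by
  have hR : 0 < ρ + ‖y‖ := by positivity
  have hsub : ball y ρ ⊆ ball 0 (ρ + ‖y‖) := ball_subset_ball' (by rw [dist_zero_right])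
  calc scaledBallIntegral μ s e y ρ
      ≤ ρ ^ s * ∫ x in ball 0 (ρ + ‖y‖), e x ∂μ := by
        refine mul_le_mul_of_nonneg_left ?_ (Real.rpow_nonneg hρ.le s)
        exact setIntegral_mono_set (hint _) (Eventually.of_forall fun x => he x) hsub.eventuallyLE
    _ = (ρ / (ρ + ‖y‖)) ^ s * Θ := by
        rw [setIntegral_ball_zero_eq_of_scaledBallIntegral_eq hR (hΘ _ hR),
          Real.div_rpow hρ.le hR.le, div_eq_mul_inv, mul_assoc]

theorem exists_tendsto_scaledBallIntegral_le (he : 0 ≤ e)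
    (hint : ∀ R, IntegrableOn e (ball 0 R) μ) {Θ : ℝ}
    (hΘ : ∀ R, 0 < R → scaledBallIntegral μ s e 0 R = Θ) {y : E}
    (hmono : MonotoneOn (scaledBallIntegral μ s e y) (Ioi 0)) :
    ∃ Θy, Tendsto (scaledBallIntegral μ s e y) (𝓝[>] 0) (𝓝 Θy) ∧ Θy ≤ Θ := by
  obtain ⟨Θy, hlim, hle⟩ := exists_tendsto_scaledBallIntegral_nhdsGT he hmono
  have hbound : Tendsto (fun k : ℕ => ((k : ℝ) / (k + ‖y‖)) ^ s * Θ) atTop (𝓝 Θ) := by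
    simpa using ((Real.continuousAt_rpow_const 1 s (Or.inl one_ne_zero)).tendsto.comp
      (tendsto_natCast_div_add_atTop ‖y‖)).mul_const Θ
  refine ⟨Θy, hlim, ge_of_tendsto hbound ?_⟩
  filter_upwards [eventually_gt_atTop 0] with k hk
  have hk' : (0 : ℝ) < k := Nat.cast_pos.2 hk
  exact (hle k hk').trans
    (scaledBallIntegral_le_rpow_mul_of_const_at_zero he hint hΘ y hk')

end Normed

theorem density_max_at_origin_general
    (n p : ℕ)
    (φ : EuclideanSpace ℝ (Fin n) → EuclideanSpace ℝ (Fin p))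
    (Dφ : EuclideanSpace ℝ (Fin n) →
      (EuclideanSpace ℝ (Fin n) →L[ℝ] EuclideanSpace ℝ (Fin p)))
    (hhom : ∀ l : ℝ, 0 < l → ∀ x, φ (l • x) = φ x)
    (hdiff : ∀ x : EuclideanSpace ℝ (Fin n), x ≠ 0 → HasFDerivAt φ (Dφ x) x)
    (hloc : LocallyIntegrable
      (fun x => ∑ i : Fin n, ‖Dφ x (EuclideanSpace.single i 1)‖ ^ 2) volume)
    (hmonoid : ∀ y : EuclideanSpace ℝ (Fin n), ∀ σ ρ : ℝ, 0 < σ → σ < ρ →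
      ρ ^ ((2 : ℝ) - n) *
          (∫ x in ball y ρ, ∑ i : Fin n, ‖Dφ x (EuclideanSpace.single i 1)‖ ^ 2) -
        σ ^ ((2 : ℝ) - n) *
          (∫ x in ball y σ, ∑ i : Fin n, ‖Dφ x (EuclideanSpace.single i 1)‖ ^ 2) =
      2 * ∫ x in ball y ρ \ ball y σ,
        ‖x - y‖ ^ ((2 : ℝ) - n) * ‖Dφ x (‖x - y‖⁻¹ • (x - y))‖ ^ 2) :
    (Tendsto
        (fun ρ : ℝ => ρ ^ ((2 : ℝ) - n) *
          ∫ x in ball (0 : EuclideanSpace ℝ (Fin n)) ρ,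
            ∑ i : Fin n, ‖Dφ x (EuclideanSpace.single i 1)‖ ^ 2)
        (nhdsWithin 0 (Ioi 0))
        (nhds (∫ x in ball (0 : EuclideanSpace ℝ (Fin n)) 1,
          ∑ i : Fin n, ‖Dφ x (EuclideanSpace.single i 1)‖ ^ 2))) ∧
    ∀ y : EuclideanSpace ℝ (Fin n), ∃ Θy : ℝ,
      Tendsto
        (fun ρ : ℝ => ρ ^ ((2 : ℝ) - n) *
          ∫ x in ball y ρ, ∑ i : Fin n, ‖Dφ x (EuclideanSpace.single i 1)‖ ^ 2)
        (nhdsWithin 0 (Ioi 0)) (nhds Θy) ∧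
      Θy ≤ ∫ x in ball (0 : EuclideanSpace ℝ (Fin n)) 1,
        ∑ i : Fin n, ‖Dφ x (EuclideanSpace.single i 1)‖ ^ 2 := by
  set e : EuclideanSpace ℝ (Fin n) → ℝ :=
    fun x => ∑ i : Fin n, ‖Dφ x (EuclideanSpace.single i 1)‖ ^ 2
  have he : 0 ≤ e := fun x => Finset.sum_nonneg fun i _ => sq_nonneg _
  have hint (R : ℝ) : IntegrableOn e (ball 0 R) :=
    (hloc.integrableOn_isCompact (isCompact_closedBall 0 R)).mono_set ball_subset_closedBall
  have hmono (y) : MonotoneOn (scaledBallIntegral volume ((2 : ℝ) - n) e y) (Ioi 0) := by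
    intro σ hσ ρ _ hσρ
    rcases hσρ.eq_or_lt with rfl | hlt
    · exact le_rfl
    · refine sub_nonneg.1 <| le_of_le_of_eq ?_ (hmonoid y σ ρ hσ hlt).symm
      exact mul_nonneg zero_le_two (integral_nonneg fun x => by positivity)
  have hconst (R : ℝ) (hR : 0 < R) :
      scaledBallIntegral volume ((2 : ℝ) - n) e 0 R = ∫ x in ball 0 1, e x := by
    refine (eq_apply_one_of_forall_sub_eq_zero (fun σ ρ hσ hσρ => ?_) hR).trans
      (by rw [scaledBallIntegral, Real.one_rpow, one_mul])
    have h0 : (0 : EuclideanSpace ℝ (Fin n)) ∉ ball 0 ρ \ ball 0 σ :=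
      fun h => h.2 (mem_ball_self hσ)
    have hid := hmonoid 0 σ ρ hσ hσρ
    simp only [sub_zero, setIntegral_mul_norm_apply_smul_self_sq_eq_zero hhom hdiff h0,
      mul_zero] at hid
    exact hid
  refine ⟨tendsto_const_nhds.congr' ?_,
    fun y => exists_tendsto_scaledBallIntegral_le he hint hconst (hmono y)⟩
  filter_upwards [self_mem_nhdsWithin] with ρ hρ using (hconst ρ hρ).symm

/-- Theorem 4 of the paper (maximum of the density function for degree zero minimizers):
if `φ : ℝⁿ → ℝᵖ` (`n ≥ 3`, `p ≥ 1`) is homogeneous of degree zero, differentiable away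
from `0` with locally integrable energy density `|Dφ|²(x) = ∑ᵢ ‖Dφ(x)(eᵢ)‖²`, and the
monotonicity identity holds at every center `y`, then the density
`Θ_φ(y) = lim_{ρ↓0} ρ^(2-n) ∫_{B_ρ(y)} |Dφ|²` exists for every `y` and satisfies
`Θ_φ(y) ≤ Θ_φ(0) = ∫_{B_1(0)} |Dφ|²`. -/
theorem density_max_at_origin
    (n p : ℕ) (hn : 3 ≤ n) (hp : 1 ≤ p)
    (φ : EuclideanSpace ℝ (Fin n) → EuclideanSpace ℝ (Fin p))
    (Dφ : EuclideanSpace ℝ (Fin n) →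
      (EuclideanSpace ℝ (Fin n) →L[ℝ] EuclideanSpace ℝ (Fin p)))
    (hhom : ∀ l : ℝ, 0 < l → ∀ x, φ (l • x) = φ x)
    (hdiff : ∀ x : EuclideanSpace ℝ (Fin n), x ≠ 0 → HasFDerivAt φ (Dφ x) x)
    (hloc : LocallyIntegrable
      (fun x => ∑ i : Fin n, ‖Dφ x (EuclideanSpace.single i 1)‖ ^ 2) volume)
    (hmonoid : ∀ y : EuclideanSpace ℝ (Fin n), ∀ σ ρ : ℝ, 0 < σ → σ < ρ →
      ρ ^ ((2 : ℝ) - n) *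
          (∫ x in ball y ρ, ∑ i : Fin n, ‖Dφ x (EuclideanSpace.single i 1)‖ ^ 2) -
        σ ^ ((2 : ℝ) - n) *
          (∫ x in ball y σ, ∑ i : Fin n, ‖Dφ x (EuclideanSpace.single i 1)‖ ^ 2) =
      2 * ∫ x in ball y ρ \ ball y σ,
        ‖x - y‖ ^ ((2 : ℝ) - n) * ‖Dφ x (‖x - y‖⁻¹ • (x - y))‖ ^ 2) :
    (Tendsto
        (fun ρ : ℝ => ρ ^ ((2 : ℝ) - n) *
          ∫ x in ball (0 : EuclideanSpace ℝ (Fin n)) ρ,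
            ∑ i : Fin n, ‖Dφ x (EuclideanSpace.single i 1)‖ ^ 2)
        (nhdsWithin 0 (Ioi 0))
        (nhds (∫ x in ball (0 : EuclideanSpace ℝ (Fin n)) 1,
          ∑ i : Fin n, ‖Dφ x (EuclideanSpace.single i 1)‖ ^ 2))) ∧
    ∀ y : EuclideanSpace ℝ (Fin n), ∃ Θy : ℝ,
      Tendsto
        (fun ρ : ℝ => ρ ^ ((2 : ℝ) - n) *
          ∫ x in ball y ρ, ∑ i : Fin n, ‖Dφ x (EuclideanSpace.single i 1)‖ ^ 2)
        (nhdsWithin 0 (Ioi 0)) (nhds Θy) ∧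
      Θy ≤ ∫ x in ball (0 : EuclideanSpace ℝ (Fin n)) 1,
        ∑ i : Fin n, ‖Dφ x (EuclideanSpace.single i 1)‖ ^ 2 :=
  density_max_at_origin_general n p φ Dφ hhom hdiff hloc hmonoid
end

section
/- Let n, p ≥ 1 and let φ : ℝⁿ → ℝ^p satisfy φ(λx) = φ(x) for every λ > 0 and every x ∈ ℝⁿ. Suppose y ∈ ℝⁿ is such that φ(y + λx) = φ(y + x) for every λ > 0 and every x ∈ ℝⁿ. Then φ(x + t y) = φ(x) for every t ∈ ℝ and every x ∈ ℝⁿ. -/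
/-!
Homogeneity lets one rescale `x + c • y = c • (y + c⁻¹ • x)`, and the hypothesis on `y` then
removes the factor `c⁻¹`, so `φ (x + c • y) = φ (x + y)` for all `c > 0`. Applied at `x - y`,
this gives `φ (x + t • y) = φ x` for `t > -1`; the case `t ≤ -1` follows by reading the same
identity backwards from `x + t • y`.
-/

section TranslationInvariance

variable {𝕜 V β : Type*} [Field 𝕜] [LinearOrder 𝕜] [IsStrictOrderedRing 𝕜]
  [AddCommGroup V] [Module 𝕜 V] {φ : V → β} {y : V}

theorem map_add_pos_smul_eq_map_add (hhom : ∀ c : 𝕜, 0 < c → ∀ x, φ (c • x) = φ x)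
    (hy : ∀ c : 𝕜, 0 < c → ∀ x, φ (y + c • x) = φ (y + x)) {c : 𝕜} (hc : 0 < c) (x : V) :
    φ (x + c • y) = φ (x + y) := by
  calc φ (x + c • y) = φ (c • (y + c⁻¹ • x)) := by
        rw [smul_add, smul_smul, mul_inv_cancel₀ hc.ne', one_smul, add_comm]
    _ = φ (y + x) := by rw [hhom c hc, hy c⁻¹ (inv_pos.mpr hc)]
    _ = φ (x + y) := by rw [add_comm]

theorem map_add_smul_eq_of_neg_one_lt (hhom : ∀ c : 𝕜, 0 < c → ∀ x, φ (c • x) = φ x)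
    (hy : ∀ c : 𝕜, 0 < c → ∀ x, φ (y + c • x) = φ (y + x)) {t : 𝕜} (ht : -1 < t) (x : V) :
    φ (x + t • y) = φ x := by
  have h := map_add_pos_smul_eq_map_add hhom hy (neg_lt_iff_pos_add.mp ht) (x - y)
  rwa [add_smul, one_smul, add_comm (t • y), ← add_assoc, sub_add_cancel] at h

theorem map_add_smul_eq_of_homogeneous (hhom : ∀ c : 𝕜, 0 < c → ∀ x, φ (c • x) = φ x)
    (hy : ∀ c : 𝕜, 0 < c → ∀ x, φ (y + c • x) = φ (y + x)) (t : 𝕜) (x : V) :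
    φ (x + t • y) = φ x := by
  rcases lt_or_ge (-1) t with ht | ht
  · exact map_add_smul_eq_of_neg_one_lt hhom hy ht x
  · have h := map_add_smul_eq_of_neg_one_lt hhom hy (t := -t) (by linarith) (x + t • y)
    rwa [neg_smul, add_neg_cancel_right, eq_comm] at h

end TranslationInvariance

theorem translation_invariance_from_homogeneity_general
    (n p : ℕ)
    (φ : EuclideanSpace ℝ (Fin n) → EuclideanSpace ℝ (Fin p))
    (hhom : ∀ l : ℝ, 0 < l → ∀ x, φ (l • x) = φ x)
    (y : EuclideanSpace ℝ (Fin n))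
    (hy : ∀ l : ℝ, 0 < l → ∀ x, φ (y + l • x) = φ (y + x)) :
    ∀ (t : ℝ) (x : EuclideanSpace ℝ (Fin n)), φ (x + t • y) = φ x :=
  map_add_smul_eq_of_homogeneous hhom hy

/-- The translation-invariance computation in Section 2.5 of the paper: if
`φ : ℝⁿ → ℝᵖ` is homogeneous of degree zero (`φ(λx) = φ(x)` for all `λ > 0`), and
`y` is such that `φ(y + λx) = φ(y + x)` for all `λ > 0` and all `x`, then
`φ(x + t y) = φ(x)` for every `t ∈ ℝ` and every `x`. -/
theorem translation_invariance_from_homogeneity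
    (n p : ℕ) (hn : 1 ≤ n) (hp : 1 ≤ p)
    (φ : EuclideanSpace ℝ (Fin n) → EuclideanSpace ℝ (Fin p))
    (hhom : ∀ l : ℝ, 0 < l → ∀ x, φ (l • x) = φ x)
    (y : EuclideanSpace ℝ (Fin n))
    (hy : ∀ l : ℝ, 0 < l → ∀ x, φ (y + l • x) = φ (y + x)) :
    ∀ (t : ℝ) (x : EuclideanSpace ℝ (Fin n)), φ (x + t • y) = φ x :=
  translation_invariance_from_homogeneity_general n p φ hhom y hy
end

section
/- Let n ≥ 1 and 0 ≤ j ≤ n − 1. There exists a function β : (0,∞) → (0,∞) with β(t) → 0 as t → 0 such that the following holds for every δ > 0: if A ⊆ ℝⁿ is any set with the property that for every y ∈ A there exists ε > 0 such that for each ρ ∈ (0, ε] there is a j-dimensional linear subspace L = L_{y,ρ} ⊆ ℝⁿ with A ∩ B_ρ(y) ⊆ {x ∈ ℝⁿ : dist(x − y, L) < δρ}, then H^{j+β(δ)}(A) = 0. -/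
/-!
Near each of its points and at every small scale `ρ`, the set lies in a `δρ`-slab around a
`j`-plane. A volume count in the plane covers the slab by at most `(5/δ)^j` balls of radius
`2δρ`, and recentring them at points of the set doubles the radius. Iterating from a scale `r`,
the set is covered by `(5/δ)^(jk)` balls of radius `(4δ)^k r`, so its `s`-dimensional Hausdorff
content is at most a constant times `((5/δ)^j (4δ)^s)^k`, which tends to `0` as soon as
`(5/δ)^j (4δ)^s < 1`. For `s = j + β` this holds when `(4δ)^β = 1/(2·20^j)`, that is
`β = log (2·20^j) / |log 4δ|`, which tends to `0` with `δ`; for `4δ ≥ 1`, `β = n + 1` exceeds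
the dimension of the ambient space.
-/

open MeasureTheory Metric Filter Set Module Topology Real
open scoped ENNReal NNReal Finset

section FiniteDimensional

variable {V : Type*} [NormedAddCommGroup V] [NormedSpace ℝ V] [FiniteDimensional ℝ V]

theorem card_le_of_isSeparated_subset_closedBall {ε R : ℝ} (hε : 0 < ε) (hR : 0 ≤ R)
    (S : Finset V) (hSR : (S : Set V) ⊆ closedBall 0 R)
    (hS : IsSeparated (ENNReal.ofReal ε) (S : Set V)) :
    (#S : ℝ) ≤ (1 + 2 * R / ε) ^ finrank ℝ V := by
  borelize V
  set μ : Measure V := Measure.addHaar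
  have hε2 : 0 < ε / 2 := half_pos hε
  have hdisj : (S : Set V).PairwiseDisjoint fun c => ball c (ε / 2) := by
    intro a ha b hb hab
    have hab : ENNReal.ofReal ε < edist a b := hS ha hb hab
    rw [edist_dist, ENNReal.ofReal_lt_ofReal_iff_of_nonneg hε.le] at hab
    exact ball_disjoint_ball (by linarith)
  have hsub : (⋃ c ∈ S, ball c (ε / 2)) ⊆ ball (0 : V) (R + ε / 2) :=
    iUnion₂_subset fun c hc => ball_subset_ball' <| by
      rw [dist_zero_right]; linarith [mem_closedBall_zero_iff.1 (hSR hc)]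
  have hvol : (#S : ℝ≥0∞) * ENNReal.ofReal ((ε / 2) ^ finrank ℝ V) ≤
      ENNReal.ofReal ((R + ε / 2) ^ finrank ℝ V) := by
    refine (ENNReal.mul_le_mul_iff_left (measure_ball_pos μ 0 one_pos).ne'
      measure_ball_lt_top.ne).1 ?_
    calc (#S : ℝ≥0∞) * ENNReal.ofReal ((ε / 2) ^ finrank ℝ V) * μ (ball 0 1)
        = μ (⋃ c ∈ S, ball c (ε / 2)) := by
          rw [measure_biUnion_finset hdisj fun c _ => measurableSet_ball]
          simp only [μ.addHaar_ball_of_pos _ hε2, Finset.sum_const, nsmul_eq_mul, mul_assoc]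
      _ ≤ μ (ball 0 (R + ε / 2)) := measure_mono hsub
      _ = ENNReal.ofReal ((R + ε / 2) ^ finrank ℝ V) * μ (ball 0 1) :=
          μ.addHaar_ball_of_pos _ (by linarith)
  rw [← ENNReal.ofReal_natCast, ← ENNReal.ofReal_mul (Nat.cast_nonneg _),
    ENNReal.ofReal_le_ofReal_iff (by positivity), ← le_div_iff₀ (by positivity),
    ← div_pow] at hvol
  refine hvol.trans_eq (congrArg (· ^ finrank ℝ V) ?_)
  field_simp
  ring

theorem exists_finset_card_le_closedBall_subset_iUnion {ε R : ℝ} (hε : 0 < ε) (hR : 0 ≤ R) :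
    ∃ S : Finset V, (#S : ℝ) ≤ (1 + 2 * R / ε) ^ finrank ℝ V ∧
      closedBall (0 : V) R ⊆ ⋃ c ∈ S, closedBall c ε := by
  set N := ⌊(1 + 2 * R / ε) ^ finrank ℝ V⌋₊
  have hsep : ∀ C ⊆ closedBall (0 : V) R, IsSeparated (ε.toNNReal : ℝ≥0∞) C →
      C.encard ≤ N := by
    intro C hCR hC
    by_contra! hlt
    obtain ⟨t, htC, ht⟩ := exists_subset_encard_eq (Order.add_one_le_of_lt hlt)
    have htfin : t.Finite := finite_of_encard_eq_coe (k := N + 1) (by exact_mod_cast ht)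
    have hcard := card_le_of_isSeparated_subset_closedBall hε hR htfin.toFinset
      (by simpa using htC.trans hCR) (by rw [Set.Finite.coe_toFinset]; exact hC.subset htC)
    have htcard : #htfin.toFinset = N + 1 := by
      exact_mod_cast htfin.encard_eq_coe_toFinset_card.symm.trans ht
    have := Nat.le_floor hcard
    omega
  have hpack : packingNumber ε.toNNReal (closedBall (0 : V) R) ≤ N :=
    iSup₂_le fun C hCR => iSup_le (hsep C hCR)
  set C := maximalSeparatedSet ε.toNNReal (closedBall (0 : V) R)
  have hC : C.encard ≤ N := hsep C maximalSeparatedSet_subset isSeparated_maximalSeparatedSet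
  have hfin : C.Finite := finite_of_encard_le_coe hC
  refine ⟨hfin.toFinset, ?_, fun x hx => ?_⟩
  · rw [hfin.encard_eq_coe_toFinset_card, Nat.cast_le] at hC
    exact (Nat.cast_le.2 hC).trans (Nat.floor_le (by positivity))
  · obtain ⟨c, hc, hxc⟩ := isCover_maximalSeparatedSet (ne_top_of_le_ne_top (by simp) hpack) hx
    refine mem_biUnion (hfin.mem_toFinset.2 hc) ?_
    rw [mem_closedBall, ← ENNReal.ofReal_le_ofReal_iff hε.le, ← edist_dist]
    exact hxc

end FiniteDimensional

theorem exists_finset_card_le_slab_subset_iUnion_ball {E : Type*} [NormedAddCommGroup E]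
    [NormedSpace ℝ E] (L : Submodule ℝ E) [FiniteDimensional ℝ L] {δ ρ : ℝ} (hδ : 0 < δ)
    (hδ1 : δ ≤ 1) (hρ : 0 < ρ) (y : E) :
    ∃ T : Finset E, (#T : ℝ) ≤ (5 / δ) ^ finrank ℝ L ∧
      {x ∈ ball y ρ | infDist (x - y) L < δ * ρ} ⊆ ⋃ c ∈ T, ball c (2 * δ * ρ) := by
  classical
  obtain ⟨S, hS, hcover⟩ :=
    exists_finset_card_le_closedBall_subset_iUnion (V := L) (by positivity : 0 < δ * ρ)
      (by positivity : 0 ≤ 2 * ρ)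
  refine ⟨S.image fun l : L => y + l, ?_, ?_⟩
  · refine (Nat.cast_le.2 Finset.card_image_le).trans (hS.trans ?_)
    gcongr
    field_simp
    linarith
  · rintro x ⟨hxy, hxL⟩
    obtain ⟨l, hl, hxl⟩ := (infDist_lt_iff ⟨0, L.zero_mem⟩).1 hxL
    have hl2 : (⟨l, hl⟩ : L) ∈ closedBall 0 (2 * ρ) := by
      rw [mem_closedBall_zero_iff, Submodule.coe_norm]
      have := norm_le_norm_add_norm_sub' l (x - y)
      rw [mem_ball, dist_eq_norm] at hxy
      rw [dist_eq_norm, ← norm_neg, neg_sub] at hxl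
      nlinarith
    obtain ⟨c, hc, hlc⟩ := mem_iUnion₂.1 (hcover hl2)
    refine mem_iUnion₂.2 ⟨y + c, Finset.mem_image_of_mem _ hc, ?_⟩
    rw [mem_closedBall, Subtype.dist_eq] at hlc
    calc dist x (y + c) = dist (x - y) c := by rw [dist_eq_norm, dist_eq_norm, sub_sub]
      _ ≤ dist (x - y) l + dist l c := dist_triangle _ _ _
      _ < δ * ρ + δ * ρ := add_lt_add_of_lt_of_le hxl hlc
      _ = 2 * δ * ρ := by ring

section Metric

variable {X : Type*}

theorem exists_finset_subset_subset_iUnion_ball_two_mul [PseudoMetricSpace X] {E : Set X}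
    {T : Finset X} {r : ℝ} (hE : E ⊆ ⋃ c ∈ T, ball c r) :
    ∃ T' : Finset X, ↑T' ⊆ E ∧ #T' ≤ #T ∧ E ⊆ ⋃ c ∈ T', ball c (2 * r) := by
  classical
  choose! p hp using fun c (h : (E ∩ ball c r).Nonempty) => h
  refine ⟨(T.filter fun c => (E ∩ ball c r).Nonempty).image p, ?_,
    Finset.card_image_le.trans (Finset.card_filter_le _ _), fun x hx => ?_⟩
  · intro x hx
    obtain ⟨c, hc, rfl⟩ := Finset.mem_image.1 hx
    exact (hp c (Finset.mem_filter.1 hc).2).1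
  · obtain ⟨c, hc, hxc⟩ := mem_iUnion₂.1 (hE hx)
    have hne : (E ∩ ball c r).Nonempty := ⟨x, hx, hxc⟩
    refine mem_iUnion₂.2 ⟨p c, Finset.mem_image_of_mem _ (Finset.mem_filter.2 ⟨hc, hne⟩), ?_⟩
    calc dist x (p c) ≤ dist x c + dist (p c) c := dist_triangle_right _ _ _
      _ < r + r := add_lt_add (mem_ball.1 hxc) (mem_ball.1 (hp c hne).2)
      _ = 2 * r := by ring

theorem exists_finset_subset_iUnion_ball_pow [PseudoMetricSpace X] {B : Set X} {C θ r : ℝ}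
    (hθ : 0 < θ) (hθ1 : θ ≤ 1) (hr : 0 < r)
    (hB : ∀ z ∈ B, ∀ ρ ∈ Ioc 0 r, ∃ T : Finset X, ↑T ⊆ B ∧ (#T : ℝ) ≤ C ∧
      B ∩ ball z ρ ⊆ ⋃ c ∈ T, ball c (θ * ρ))
    {y : X} (hy : y ∈ B) (k : ℕ) :
    ∃ S : Finset X, ↑S ⊆ B ∧ (#S : ℝ) ≤ C ^ k ∧ B ∩ ball y r ⊆ ⋃ c ∈ S, ball c (θ ^ k * r) := by
  classical
  have hC : 0 ≤ C := by
    obtain ⟨T, -, hT, -⟩ := hB y hy r ⟨hr, le_rfl⟩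
    exact (Nat.cast_nonneg _).trans hT
  induction k with
  | zero => exact ⟨{y}, by simpa using hy, by simp, fun x hx => by simpa using hx.2⟩
  | succ k ih =>
    obtain ⟨S, hSB, hSC, hScover⟩ := ih
    have hρ : θ ^ k * r ∈ Ioc 0 r :=
      ⟨by positivity, mul_le_of_le_one_left hr.le (pow_le_one₀ hθ.le hθ1)⟩
    choose! T hTB hTC hTcover using fun z hz => hB z hz _ hρ
    refine ⟨S.biUnion fun z => T z, ?_, ?_, fun x hx => ?_⟩
    · simpa using fun z hz => hTB z (hSB hz)
    · calc (#(S.biUnion T) : ℝ) ≤ ∑ z ∈ S, (#(T z) : ℝ) := by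
            exact_mod_cast Finset.card_biUnion_le
        _ ≤ ∑ _z ∈ S, C := Finset.sum_le_sum fun z hz => hTC z (hSB hz)
        _ = #S * C := by rw [Finset.sum_const, nsmul_eq_mul]
        _ ≤ C ^ k * C := by gcongr
        _ = C ^ (k + 1) := (pow_succ _ _).symm
    · obtain ⟨z, hz, hxz⟩ := mem_iUnion₂.1 (hScover hx)
      obtain ⟨c, hc, hxc⟩ := mem_iUnion₂.1 (hTcover z (hSB hz) ⟨hx.1, hxz⟩)
      refine mem_iUnion₂.2 ⟨c, Finset.mem_biUnion.2 ⟨z, hz, hc⟩, ?_⟩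
      rwa [pow_succ, mul_comm _ θ, mul_assoc]

theorem ediam_ball_le_ofReal [PseudoMetricSpace X] (x : X) (r : ℝ) :
    ediam (ball x r) ≤ ENNReal.ofReal (2 * r) := by
  rw [← eball_ofReal, ENNReal.ofReal_mul zero_le_two, ENNReal.ofReal_ofNat]
  exact ediam_eball_le

theorem hausdorffMeasure_eq_zero_of_finset_covers [MetricSpace X] [MeasurableSpace X]
    [BorelSpace X] {s : ℝ} (hs : 0 ≤ s) {E : Set X} (S : ℕ → Finset X) {r : ℕ → ℝ}
    (hr0 : ∀ k, 0 ≤ r k) (hr : Tendsto r atTop (𝓝 0))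
    (hcover : ∀ k, E ⊆ ⋃ c ∈ S k, ball c (r k))
    (hS : Tendsto (fun k => #(S k) * r k ^ s) atTop (𝓝 0)) :
    μH[s] E = 0 := by
  have hdiam : Tendsto (fun k => ENNReal.ofReal (2 * r k)) atTop (𝓝 0) := by
    simpa using ENNReal.tendsto_ofReal (hr.const_mul 2)
  have hle := Measure.hausdorffMeasure_le_liminf_sum s E _ hdiam
    (fun k (c : S k) => ball (c : X) (r k))
    (Eventually.of_forall fun k c => ediam_ball_le_ofReal _ _)
    (Eventually.of_forall fun k x hx => by
      obtain ⟨c, hc, hxc⟩ := mem_iUnion₂.1 (hcover k hx)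
      exact mem_iUnion.2 ⟨⟨c, hc⟩, hxc⟩)
  have hterm : ∀ k, ∑ c : S k, ediam (ball (c : X) (r k)) ^ s ≤
      ENNReal.ofReal (2 ^ s * (#(S k) * r k ^ s)) := fun k => by
    calc ∑ c : S k, ediam (ball (c : X) (r k)) ^ s
        ≤ ∑ _c : S k, ENNReal.ofReal (2 * r k) ^ s :=
          Finset.sum_le_sum fun c _ => ENNReal.rpow_le_rpow (ediam_ball_le_ofReal _ _) hs
      _ = ENNReal.ofReal (2 ^ s * (#(S k) * r k ^ s)) := by
          rw [Finset.sum_const, Finset.card_univ, Fintype.card_coe, nsmul_eq_mul,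
            ENNReal.ofReal_rpow_of_nonneg (by linarith [hr0 k]) hs,
            Real.mul_rpow zero_le_two (hr0 k), ← ENNReal.ofReal_natCast,
            ← ENNReal.ofReal_mul (Nat.cast_nonneg _)]
          ring_nf
  have hlim : Tendsto (fun k => ENNReal.ofReal (2 ^ s * (#(S k) * r k ^ s))) atTop (𝓝 0) := by
    simpa using ENNReal.tendsto_ofReal (hS.const_mul (2 ^ s))
  refine le_antisymm (hle.trans ?_) zero_le
  exact (liminf_le_liminf (Eventually.of_forall hterm)).trans_eq hlim.liminf_eq

theorem hausdorffMeasure_inter_ball_eq_zero [MetricSpace X] [MeasurableSpace X] [BorelSpace X]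
    {B : Set X} {C θ r s : ℝ} (hs : 0 ≤ s) (hθ : 0 < θ) (hθ1 : θ < 1) (hCθ : C * θ ^ s < 1)
    (hr : 0 < r)
    (hB : ∀ z ∈ B, ∀ ρ ∈ Ioc 0 r, ∃ T : Finset X, ↑T ⊆ B ∧ (#T : ℝ) ≤ C ∧
      B ∩ ball z ρ ⊆ ⋃ c ∈ T, ball c (θ * ρ))
    {y : X} (hy : y ∈ B) : μH[s] (B ∩ ball y r) = 0 := by
  choose S _ hSC hScover using exists_finset_subset_iUnion_ball_pow hθ hθ1.le hr hB hy
  have hC : 0 ≤ C := (Nat.cast_nonneg _).trans ((hSC 1).trans_eq (pow_one C))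
  refine hausdorffMeasure_eq_zero_of_finset_covers hs S (fun k => by positivity)
    (by simpa using (tendsto_pow_atTop_nhds_zero_of_lt_one hθ.le hθ1).mul_const r) hScover ?_
  have hgeom : Tendsto (fun k : ℕ => (C * θ ^ s) ^ k * r ^ s) atTop (𝓝 0) := by
    simpa using (tendsto_pow_atTop_nhds_zero_of_lt_one (by positivity) hCθ).mul_const (r ^ s)
  refine squeeze_zero (fun k => by positivity) (fun k => ?_) hgeom
  calc (#(S k) : ℝ) * (θ ^ k * r) ^ s ≤ C ^ k * (θ ^ k * r) ^ s := by gcongr; exact hSC k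
    _ = (C * θ ^ s) ^ k * r ^ s := by
      rw [mul_rpow (by positivity) hr.le, ← rpow_pow_comm hθ.le, mul_pow, mul_assoc]

end Metric

noncomputable def flatnessExponent (j n : ℕ) (t : ℝ) : ℝ :=
  if 4 * t < 1 then logb (4 * t) (2 * 20 ^ j)⁻¹ else n + 1

theorem flatnessExponent_pos {j n : ℕ} {t : ℝ} (ht : 0 < t) : 0 < flatnessExponent j n t := by
  unfold flatnessExponent
  split_ifs with h
  · refine logb_pos_of_base_lt_one (by positivity) h (by positivity) (inv_lt_one_of_one_lt₀ ?_)
    nlinarith [one_le_pow₀ (M₀ := ℝ) (a := 20) (n := j) (by norm_num)]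
  · positivity

theorem tendsto_flatnessExponent (j n : ℕ) :
    Tendsto (flatnessExponent j n) (𝓝[>] 0) (𝓝 0) := by
  have h4 : Tendsto (fun t : ℝ => 4 * t) (𝓝[>] 0) (𝓝[>] 0) := by
    nth_rewrite 1 [← comap_mulLeft_nhdsGT_zero (by norm_num : (0 : ℝ) < 4)]
    exact tendsto_comap
  have hev : (fun t => log (2 * 20 ^ j)⁻¹ / log (4 * t)) =ᶠ[𝓝[>] 0] flatnessExponent j n := by
    filter_upwards [h4.eventually (Ioo_mem_nhdsGT one_pos)] with t ht
    rw [flatnessExponent, if_pos ht.2, logb]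
  exact (tendsto_const_nhds.div_atBot (tendsto_log_nhdsGT_zero.comp h4)).congr' hev

theorem mul_rpow_add_flatnessExponent_lt_one {j n : ℕ} {δ : ℝ} (hδ : 0 < δ) (h : 4 * δ < 1) :
    (5 / δ) ^ j * (4 * δ) ^ (j + flatnessExponent j n δ) < 1 := by
  rw [rpow_add (by positivity), rpow_natCast, flatnessExponent, if_pos h,
    rpow_logb (by positivity) h.ne (by positivity), ← mul_assoc, ← mul_pow]
  field_simp
  norm_num

section Flat

variable {E : Type*} [NormedAddCommGroup E] [NormedSpace ℝ E]

def IsFlatAt (j : ℕ) (δ r : ℝ) (A : Set E) (y : E) : Prop :=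
  ∀ ρ ∈ Ioc 0 r, ∃ L : Submodule ℝ E, finrank ℝ L = j ∧
    A ∩ ball y ρ ⊆ {x | infDist (x - y) (L : Set E) < δ * ρ}

variable {j : ℕ} {δ r : ℝ} {A B : Set E} {y : E}

theorem IsFlatAt.mono (h : IsFlatAt j δ r A y) (hBA : B ⊆ A) {r' : ℝ} (hr : r' ≤ r) :
    IsFlatAt j δ r' B y := fun ρ hρ =>
  (h ρ ⟨hρ.1, hρ.2.trans hr⟩).imp fun _ hL => ⟨hL.1, (inter_subset_inter_left _ hBA).trans hL.2⟩

theorem IsFlatAt.exists_finset_subset_iUnion_ball [FiniteDimensional ℝ E]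
    (h : IsFlatAt j δ r B y) (hδ : 0 < δ) (hδ1 : δ ≤ 1) {ρ : ℝ} (hρ : ρ ∈ Ioc 0 r) :
    ∃ T : Finset E, ↑T ⊆ B ∧ (#T : ℝ) ≤ (5 / δ) ^ j ∧
      B ∩ ball y ρ ⊆ ⋃ c ∈ T, ball c (4 * δ * ρ) := by
  obtain ⟨L, rfl, hL⟩ := h ρ hρ
  obtain ⟨T, hT, hcover⟩ := exists_finset_card_le_slab_subset_iUnion_ball L hδ hδ1 hρ.1 y
  obtain ⟨T', hT'B, hT'T, hcover'⟩ := exists_finset_subset_subset_iUnion_ball_two_mul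
    (E := B ∩ ball y ρ) fun x hx => hcover ⟨hx.2, hL hx⟩
  refine ⟨T', hT'B.trans inter_subset_left, (Nat.cast_le.2 hT'T).trans hT, ?_⟩
  simpa only [← mul_assoc, show (2 : ℝ) * 2 = 4 by norm_num] using hcover'

variable [FiniteDimensional ℝ E] [MeasurableSpace E] [BorelSpace E] {s : ℝ}

theorem hausdorffMeasure_eq_zero_of_isFlatAt (hs : 0 ≤ s) (hδ : 0 < δ) (hδ4 : 4 * δ < 1)
    (hθ : (5 / δ) ^ j * (4 * δ) ^ s < 1) (hr : 0 < r) (hB : ∀ z ∈ B, IsFlatAt j δ r B z) :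
    μH[s] B = 0 := by
  refine measure_null_of_locally_null B fun y hy =>
    ⟨B ∩ ball y r, inter_mem_nhdsWithin B (ball_mem_nhds y hr), ?_⟩
  exact hausdorffMeasure_inter_ball_eq_zero hs (by positivity) hδ4 hθ hr
    (fun z hz ρ hρ => (hB z hz).exists_finset_subset_iUnion_ball hδ (by linarith) hρ) hy

theorem hausdorffMeasure_eq_zero_of_forall_isFlatAt (hs : 0 ≤ s) (hδ : 0 < δ)
    (hδ4 : 4 * δ < 1) (hθ : (5 / δ) ^ j * (4 * δ) ^ s < 1)
    (hA : ∀ y ∈ A, ∃ ε, 0 < ε ∧ IsFlatAt j δ ε A y) : μH[s] A = 0 := by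
  have hcover : A ⊆ ⋃ m : ℕ, {y ∈ A | IsFlatAt j δ (1 / (m + 1)) A y} := fun y hy => by
    obtain ⟨ε, hε, hflat⟩ := hA y hy
    obtain ⟨m, hm⟩ := exists_nat_one_div_lt hε
    exact mem_iUnion.2 ⟨m, hy, hflat.mono subset_rfl hm.le⟩
  refine measure_mono_null hcover (measure_iUnion_null fun m => ?_)
  exact hausdorffMeasure_eq_zero_of_isFlatAt hs hδ hδ4 hθ Nat.one_div_pos_of_nat
    fun z hz => hz.2.mono (sep_subset _ _) le_rfl

end Flat

theorem dimension_reducing_general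
    (n j : ℕ) :
    ∃ β : ℝ → ℝ, (∀ t : ℝ, 0 < t → 0 < β t) ∧
      Tendsto β (nhdsWithin 0 (Ioi 0)) (nhds 0) ∧
      ∀ δ : ℝ, 0 < δ →
        ∀ A : Set (EuclideanSpace ℝ (Fin n)),
          (∀ y ∈ A, ∃ ε : ℝ, 0 < ε ∧ ∀ ρ ∈ Ioc (0 : ℝ) ε,
            ∃ L : Submodule ℝ (EuclideanSpace ℝ (Fin n)),
              Module.finrank ℝ L = j ∧
              A ∩ ball y ρ ⊆
                {x : EuclideanSpace ℝ (Fin n) |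
                  infDist (x - y) (L : Set (EuclideanSpace ℝ (Fin n))) < δ * ρ}) →
          μH[(j : ℝ) + β δ] A = 0 := by
  refine ⟨flatnessExponent j n, fun t => flatnessExponent_pos, tendsto_flatnessExponent j n,
    fun δ hδ A hA => ?_⟩
  by_cases h : 4 * δ < 1
  · exact hausdorffMeasure_eq_zero_of_forall_isFlatAt
      (add_nonneg j.cast_nonneg (flatnessExponent_pos hδ).le) hδ h
      (mul_rpow_add_flatnessExponent_lt_one hδ h) hA
  · have hdim : (finrank ℝ (EuclideanSpace ℝ (Fin n)) : ℝ) < j + flatnessExponent j n δ := by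
      rw [finrank_euclideanSpace_fin, flatnessExponent, if_neg h]
      linarith [j.cast_nonneg (α := ℝ)]
    simp [Real.hausdorffMeasure_of_finrank_lt hdim]

/-- Lemma 4 of the paper (Federer-type dimension reducing estimate): for `0 ≤ j ≤ n-1`
there is a function `β : (0,∞) → (0,∞)` with `β(t) → 0` as `t → 0` such that for every
`δ > 0`, any set `A ⊆ ℝⁿ` with the property that near each of its points, at all
sufficiently small scales `ρ`, `A` lies in the `δρ`-neighborhood of (a translate of)
some `j`-dimensional linear subspace, satisfies `H^{j+β(δ)}(A) = 0`. -/
theorem dimension_reducing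
    (n j : ℕ) (hn : 1 ≤ n) (hj : j ≤ n - 1) :
    ∃ β : ℝ → ℝ, (∀ t : ℝ, 0 < t → 0 < β t) ∧
      Tendsto β (nhdsWithin 0 (Ioi 0)) (nhds 0) ∧
      ∀ δ : ℝ, 0 < δ →
        ∀ A : Set (EuclideanSpace ℝ (Fin n)),
          (∀ y ∈ A, ∃ ε : ℝ, 0 < ε ∧ ∀ ρ ∈ Ioc (0 : ℝ) ε,
            ∃ L : Submodule ℝ (EuclideanSpace ℝ (Fin n)),
              Module.finrank ℝ L = j ∧
              A ∩ ball y ρ ⊆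
                {x : EuclideanSpace ℝ (Fin n) |
                  infDist (x - y) (L : Set (EuclideanSpace ℝ (Fin n))) < δ * ρ}) →
          μH[(j : ℝ) + β δ] A = 0 :=
  dimension_reducing_general n j
end
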